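/- With ⊕^∨(w, x) defined as −⊗^∧(w, −x), where ⊗^∧(w, x) = minᵢ { ((1/2 − w̄ᵢ)·sign(xᵢ) + 1/2)·xᵢ }, one has max(x)·⊕^∨(w, x) > 0 for every x ∈ ℝ^N with all entries nonzero, provided all wᵢ > 0 and N ≥ 2. -/
import Mathlib


noncomputable def otimes (N : ℕ) (hN : 0 < N) (w x : Fin N → ℝ) : ℝ :=
  Finset.univ.inf' ⟨⟨0, hN⟩, Finset.mem_univ _⟩
    (fun i => ((1 / 2 - w i / ∑ j, w j) * Real.sign (x i) + 1 / 2) * x i)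

/-- Weighted disjunction aggregator. -/
noncomputable def oplus (N : ℕ) (hN : 0 < N) (w x : Fin N → ℝ) : ℝ :=
  -otimes N hN w (-x)

lemma hsign_aux (wb : ℝ) (hw0 : 0 < wb) (hw1 : wb < 1) (a : ℝ) (ha : a ≠ 0) :
    a * (((1/2 - wb) * Real.sign (-a) + 1/2) * (-a)) < 0 := by
  rcases lt_or_gt_of_ne ha with h | h
  · rw [Real.sign_of_pos (by linarith : (0:ℝ) < -a)]
    nlinarith [mul_pos_of_neg_of_neg h h]
  · rw [Real.sign_of_neg (by linarith : -a < (0:ℝ))]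
    nlinarith [mul_pos h h]

theorem oplus_same_sign_as_max (N : ℕ) (hN : 2 ≤ N) (w x : Fin N → ℝ)
    (hw : ∀ i, 0 < w i) (hx : ∀ i, x i ≠ 0) :
    (Finset.univ.sup' ⟨⟨0, by omega⟩, Finset.mem_univ _⟩ x) *
      oplus N (by omega) w x > 0 := by
  have hN0 : 0 < N := by omega
  have hS : 0 < ∑ j, w j := Finset.sum_pos (fun j _ => hw j) ⟨⟨0, hN0⟩, Finset.mem_univ _⟩
  have hwbar : ∀ i : Fin N, 0 < w i / ∑ j, w j ∧ w i / ∑ j, w j < 1 := by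
    intro i
    constructor
    · exact div_pos (hw i) hS
    · rw [div_lt_one hS]
      obtain ⟨j, hj⟩ : ∃ j : Fin N, j ≠ i := by
        by_cases h : i = ⟨0, hN0⟩
        · exact ⟨⟨1, by omega⟩, by simp [h, Fin.ext_iff]⟩
        · exact ⟨⟨0, hN0⟩, fun hc => h hc.symm⟩
      exact Finset.single_lt_sum hj (Finset.mem_univ _) (Finset.mem_univ _)
        (hw j) (fun k _ _ => (hw k).le)
  set g : Fin N → ℝ := fun i => ((1 / 2 - w i / ∑ j, w j) * Real.sign ((-x) i) + 1 / 2) * ((-x) i) with hg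
  have hkey : ∀ i, x i * g i < 0 := by
    intro i
    have := hsign_aux (w i / ∑ j, w j) (hwbar i).1 (hwbar i).2 (x i) (hx i)
    simpa [hg] using this
  have ne : (Finset.univ : Finset (Fin N)).Nonempty := ⟨⟨0, hN0⟩, Finset.mem_univ _⟩
  show _ * -(Finset.univ.inf' _ g) > 0
  by_cases hpos : ∃ i, 0 < x i
  · obtain ⟨i, hi⟩ := hpos
    have hsup : 0 < Finset.univ.sup' ne x :=
      lt_of_lt_of_le hi (Finset.le_sup' x (Finset.mem_univ i))
    have hgi : g i < 0 := by nlinarith [hkey i]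
    have hinf : Finset.univ.inf' ne g < 0 :=
      lt_of_le_of_lt (Finset.inf'_le g (Finset.mem_univ i)) hgi
    exact mul_pos hsup (by linarith)
  · push_neg at hpos
    have hneg : ∀ i, x i < 0 := fun i => lt_of_le_of_ne (hpos i) (hx i)
    have hsup : Finset.univ.sup' ne x < 0 :=
      (Finset.sup'_lt_iff ne).mpr (fun i _ => hneg i)
    have hinf : 0 < Finset.univ.inf' ne g := by
      rw [Finset.lt_inf'_iff]
      intro i _
      nlinarith [hkey i, hneg i]
    exact mul_pos_of_neg_of_neg hsup (by linarith)
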